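/- arXiv:math/0207276 — 5 statements merged into one kernel-verified Lean document; each statement's English description precedes it below -/
import Mathlib

section
/- For every nonzero real t, ∏_{k=1}^∞ (1 - 2it/(k(k+1))) = cos((π/2)√(1+8it)) / (−2πit), where the square root is a branch with (√(1+8it))² = 1 + 8it. -/
open Filter Real Topology

/-!
Write `1 + 8it = s²` and `α = (s - 1)/2`, so that `α(1 + α) = 2it` and
`1 - 2it/(k(k+1)) = (k - α)(k + 1 + α)/(k(k+1))`. The partial products then telescope into a
partial Euler product `∏_{j ≤ N} (1 - α²/j²)` times `(1 + α/(N+1))/(1 + α)`, whose limit is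
`sin(πα)/(πα(1+α))`; finally `sin(πα) = -cos(πs/2)`.
-/

namespace Complex

theorem one_add_mul_prod_one_sub_div_mul_succ (α : ℂ) (N : ℕ) :
    (1 + α) * ∏ k ∈ Finset.Icc 1 N, (1 - α * (1 + α) / (k * (k + 1))) =
      (∏ j ∈ Finset.range N, (1 - α ^ 2 / ((j : ℂ) + 1) ^ 2)) * (1 + α / ((N : ℂ) + 1)) := by
  induction N with
  | zero => simp
  | succ n ih =>
    have hn₁ : (n : ℂ) + 1 ≠ 0 := Nat.cast_add_one_ne_zero n
    have hn₂ : (n : ℂ) + 1 + 1 ≠ 0 := by exact_mod_cast Nat.succ_ne_zero (n + 1)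
    rw [Finset.prod_Icc_succ_top (Nat.le_add_left 1 n), ← mul_assoc, ih, Finset.prod_range_succ]
    push_cast
    field_simp
    ring

theorem tendsto_mul_prod_one_sub_div_mul_succ (α : ℂ) :
    Tendsto (fun N : ℕ => π * (α * (1 + α)) *
        ∏ k ∈ Finset.Icc 1 N, (1 - α * (1 + α) / (k * (k + 1)))) atTop (𝓝 (sin (π * α))) := by
  have hcorr : Tendsto (fun N : ℕ => 1 + α / ((N : ℂ) + 1)) atTop (𝓝 1) := by
    have h := (tendsto_add_atTop_iff_nat 1).2 (tendsto_const_div_atTop_nhds_zero_nat α)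
    simpa using tendsto_const_nhds.add h
  have h := (tendsto_euler_sin_prod α).mul hcorr
  rw [mul_one] at h
  refine h.congr fun N => ?_
  rw [mul_assoc, mul_assoc, ← one_add_mul_prod_one_sub_div_mul_succ]
  ring

end Complex

/-- For nonzero real `t`, `∏_{k=1}^∞ (1 - 2it/(k(k+1))) = cos((π/2)√(1+8it)) / (-2πit)`,
where `s` is any branch of the square root, i.e. `s^2 = 1 + 8it`. -/
theorem stmt5 (t : ℝ) (ht : t ≠ 0) (s : ℂ) (hs : s ^ 2 = 1 + 8 * Complex.I * t) :
    Tendsto (fun N : ℕ => ∏ k ∈ Finset.Icc 1 N,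
        (1 - 2 * Complex.I * t / (k * (k + 1)))) atTop
      (nhds (Complex.cos (π / 2 * s) / (-2 * π * Complex.I * t))) := by
  set α := (s - 1) / 2
  have hα : α * (1 + α) = 2 * Complex.I * t := by linear_combination hs / 4
  have hsin : Complex.sin (π * α) = -Complex.cos (π / 2 * s) := by
    rw [← Complex.sin_sub_pi_div_two]
    congr 1
    ring
  have hden : (π : ℂ) * (2 * Complex.I * t) ≠ 0 := by simp [ht, Real.pi_ne_zero]
  have h := (Complex.tendsto_mul_prod_one_sub_div_mul_succ α).div_const (π * (2 * Complex.I * t))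
  rw [hα, hsin] at h
  convert h using 2 with N
  · rw [mul_div_cancel_left₀ _ hden]
  · rw [neg_div, ← div_neg]
    ring
end

section
/- Let α, β be complex numbers with α + β = −1 and such that α, β are not nonnegative integers. Then ∏_{k=1}^∞ ((k−α)(k−β))/(k(k+1)) = 1/(αβ Γ(−α)Γ(−β)). -/
/-!
Split each factor as `((k - α)/k) · ((k - β)/k) · (k/(k + 1))`. After multiplying by `N^α` and
`N^β`, the first two partial products are Gauss's products, which converge to `1/((-α)Γ(-α))` and
`1/((-β)Γ(-β))`; the third telescopes to `1/(N + 1)`, and since `α + β = -1` the compensating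
factor `N^(-α) N^(-β) = N` turns it into `N/(N + 1) → 1`.
-/

open Filter Finset Nat Complex Topology

theorem prod_range_add_natCast_eq_mul_prod_Icc (s : ℂ) (N : ℕ) :
    ∏ j ∈ range (N + 1), (s + j) = s * ∏ k ∈ Icc 1 N, ((k : ℂ) + s) := by
  rw [prod_range_succ', Nat.cast_zero, add_zero, mul_comm, range_eq_Ico,
    prod_Ico_add' (fun k : ℕ => s + k), Ico_add_one_right_eq_Icc]
  simp_rw [add_comm s]

theorem prod_Icc_natCast_eq_factorial (N : ℕ) : ∏ k ∈ Icc 1 N, (k : ℂ) = N ! := by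
  rw [← Ico_add_one_right_eq_Icc, ← prod_Ico_id_eq_factorial, Nat.cast_prod]

theorem prod_Icc_div_add_one (N : ℕ) : ∏ k ∈ Icc 1 N, (k : ℂ) / (k + 1) = ((N : ℂ) + 1)⁻¹ := by
  induction N with
  | zero => simp
  | succ n ih =>
    rw [prod_Icc_succ_top (by omega), ih]
    push_cast
    field_simp

theorem prod_Icc_add_div_mul_cpow_eq {s : ℂ} (hs : s ≠ 0) {N : ℕ} (hN : N ≠ 0) :
    (∏ k ∈ Icc 1 N, ((k : ℂ) + s) / k) * (N : ℂ) ^ (-s) = (s * GammaSeq s N)⁻¹ := by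
  have hN' : (N : ℂ) ≠ 0 := Nat.cast_ne_zero.mpr hN
  rw [prod_div_distrib, prod_Icc_natCast_eq_factorial, GammaSeq,
    prod_range_add_natCast_eq_mul_prod_Icc, cpow_neg]
  -- if some `k + s` vanishes, `GammaSeq s N` divides by zero and both sides are `0`
  by_cases hP : ∏ k ∈ Icc 1 N, ((k : ℂ) + s) = 0
  · simp [hP]
  · have hpow : (N : ℂ) ^ s ≠ 0 := cpow_ne_zero_iff.mpr (Or.inl hN')
    have hfac : (N ! : ℂ) ≠ 0 := Nat.cast_ne_zero.mpr (factorial_ne_zero N)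
    field_simp

theorem tendsto_prod_Icc_add_div_mul_cpow {s : ℂ} (hs : ∀ m : ℕ, s ≠ -m) :
    Tendsto (fun N : ℕ => (∏ k ∈ Icc 1 N, ((k : ℂ) + s) / k) * (N : ℂ) ^ (-s)) atTop
      (𝓝 (s * Gamma s)⁻¹) := by
  have hs0 : s ≠ 0 := by simpa using hs 0
  refine (((GammaSeq_tendsto_Gamma s).const_mul s).inv₀
    (mul_ne_zero hs0 (Gamma_ne_zero hs))).congr' ?_
  filter_upwards [eventually_ne_atTop 0] with N hN
  exact (prod_Icc_add_div_mul_cpow_eq hs0 hN).symm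

/-- For `α, β ∈ ℂ` with `α + β = -1` and neither a nonnegative integer,
`∏_{k=1}^∞ ((k-α)(k-β))/(k(k+1)) = 1/(αβ Γ(-α)Γ(-β))`. -/
theorem stmt6 (α β : ℂ) (hab : α + β = -1)
    (hα : ∀ n : ℕ, α ≠ n) (hβ : ∀ n : ℕ, β ≠ n) :
    Tendsto (fun N : ℕ => ∏ k ∈ Finset.Icc 1 N,
        (((k : ℂ) - α) * ((k : ℂ) - β)) / ((k : ℂ) * (k + 1))) atTop
      (nhds (1 / (α * β * Complex.Gamma (-α) * Complex.Gamma (-β)))) := by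
  have hfactor : ∀ᶠ N : ℕ in atTop,
      (∏ k ∈ Icc 1 N, (((k : ℂ) - α) * ((k : ℂ) - β)) / ((k : ℂ) * (k + 1))) =
        (∏ k ∈ Icc 1 N, ((k : ℂ) + -α) / k) * (N : ℂ) ^ (-(-α)) *
          ((∏ k ∈ Icc 1 N, ((k : ℂ) + -β) / k) * (N : ℂ) ^ (-(-β))) * (N / (N + 1)) := by
    filter_upwards [eventually_ne_atTop 0] with N hN
    have hN' : (N : ℂ) ≠ 0 := Nat.cast_ne_zero.mpr hN
    have hpow : (N : ℂ) ^ (-(-α)) * (N : ℂ) ^ (-(-β)) = (N : ℂ)⁻¹ := by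
      rw [← cpow_add _ _ hN', neg_neg, neg_neg, hab, cpow_neg_one]
    have hsplit : ∀ k ∈ Icc 1 N, (((k : ℂ) - α) * ((k : ℂ) - β)) / ((k : ℂ) * (k + 1)) =
        ((k : ℂ) + -α) / k * (((k : ℂ) + -β) / k) * ((k : ℂ) / (k + 1)) := by
      intro k hk
      have hk : (k : ℂ) ≠ 0 := Nat.cast_ne_zero.mpr (by grind)
      field_simp
      ring
    rw [prod_congr rfl hsplit, prod_mul_distrib, prod_mul_distrib, prod_Icc_div_add_one,
      mul_mul_mul_comm, hpow]
    field_simp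
  have hlim := ((tendsto_prod_Icc_add_div_mul_cpow fun m h => hα m (neg_injective h)).mul
    (tendsto_prod_Icc_add_div_mul_cpow fun m h => hβ m (neg_injective h))).mul
      (tendsto_natCast_div_add_atTop (1 : ℂ))
  convert hlim.congr' (hfactor.mono fun _ h => h.symm) using 2
  ring
end

section
/- The function f(x) = ∑_{k=2}^∞ (−1)^k e^{−C(k,2)x} C(k,2)(2k−1), defined for x > 0, satisfies ∫_0^∞ f(x) dx = 1; that is, f is a probability density on (0, ∞). -/
/-!
Termwise, `f = -P'` for `P(x) = ∑_{k≥2} (-1)^k (2k-1) e^{-C(k,2) x}`, and `P` decays exponentially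
at `∞`, so `∫_0^∞ f = lim_{x→0+} P(x)`. Since `C(k,2) = ((2k-1)² - 1) / 8`, the series
`1 - P(x)` is `½ e^{x/8} S(x / 8π)` for the theta series `S(t) = ∑ 2n sin(πn/2) e^{-πn²t}`
(Mathlib's `sinKernel (1/4)`). The theta functional equation `S(t) = t^{-3/2} K(1/t)`, with
`K = oddKernel (1/4)` decaying exponentially, shows that `S` and `S'` tend to `0` as `t → 0+`.
Hence `P(0+) = 1`, and `f` is bounded near `0`, hence integrable on `(0, ∞)`.
-/

open MeasureTheory Real Set Filter Topology Asymptotics HurwitzZeta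

noncomputable section

def expSum {ι : Type*} (a b : ι → ℝ) (x : ℝ) : ℝ := ∑' i, a i * exp (-b i * x)

def ExpSummable {ι : Type*} (a b : ι → ℝ) : Prop :=
  ∀ y > 0, Summable fun i ↦ |a i| * exp (-b i * y)

section ExpSum

variable {ι : Type*} {a b : ι → ℝ}

lemma ExpSummable.summable (h : ExpSummable a b) {y : ℝ} (hy : 0 < y) :
    Summable fun i ↦ a i * exp (-b i * y) :=
  .of_norm (by simpa [abs_mul, abs_of_pos (exp_pos _)] using h y hy)

lemma ExpSummable.mul_rate (hb : ∀ i, 0 ≤ b i) (h : ExpSummable a b) :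
    ExpSummable (a * b) b := by
  intro y hy
  refine ((h (y / 2) (half_pos hy)).mul_left (2 / y)).of_nonneg_of_le (fun i ↦ by positivity)
    fun i ↦ ?_
  have hsplit : exp (-b i * y) = exp (-b i * (y / 2)) * exp (-b i * (y / 2)) := by
    rw [← exp_add]; ring_nf
  have key : b i * exp (-b i * (y / 2)) ≤ 2 / y := by
    have hs := (le_add_of_nonneg_right zero_le_one).trans (add_one_le_exp (b i * y / 2))
    rw [le_div_iff₀ hy, show -b i * (y / 2) = -(b i * y / 2) by ring, exp_neg, mul_right_comm,
      ← div_eq_mul_inv, div_le_iff₀ (exp_pos _)]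
    linarith
  rw [Pi.mul_apply, abs_mul, abs_of_nonneg (hb i), hsplit]
  calc |a i| * b i * (exp (-b i * (y / 2)) * exp (-b i * (y / 2)))
      = |a i| * exp (-b i * (y / 2)) * (b i * exp (-b i * (y / 2))) := by ring
    _ ≤ |a i| * exp (-b i * (y / 2)) * (2 / y) := by gcongr
    _ = 2 / y * (|a i| * exp (-b i * (y / 2))) := by ring

lemma hasDerivAt_expSum (hb : ∀ i, 0 ≤ b i) (ha : ExpSummable a b) {x : ℝ} (hx : 0 < x) :
    HasDerivAt (expSum a b) (-expSum (a * b) b x) x := by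
  rw [expSum, ← tsum_neg]
  refine hasDerivAt_tsum_of_isPreconnected (g := fun i y ↦ a i * exp (-b i * y))
    (g' := fun i y ↦ -(a i * b i * exp (-b i * y)))
    ((ha.mul_rate hb) (x / 2) (half_pos hx)) isOpen_Ioi isPreconnected_Ioi
    (fun i y _ ↦ ?_) (fun i y hy ↦ ?_) (half_lt_self hx) (ha.summable hx) (half_lt_self hx)
  · exact (((hasDerivAt_id y).const_mul (-b i)).exp.const_mul (a i)).congr_deriv
      (by simp only [id]; ring)
  · rw [norm_neg, Real.norm_eq_abs, abs_mul, abs_of_pos (exp_pos _), Pi.mul_apply]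
    have : -b i * y ≤ -b i * (x / 2) := by nlinarith [hb i, mem_Ioi.mp hy]
    gcongr

lemma continuousOn_expSum (hb : ∀ i, 0 ≤ b i) (ha : ExpSummable a b) :
    ContinuousOn (expSum a b) (Ioi 0) :=
  fun _ hx ↦ (hasDerivAt_expSum hb ha hx).continuousAt.continuousWithinAt

lemma isBigO_atTop_expSum {β : ℝ} (hβ : ∀ i, β ≤ b i) (ha : ExpSummable a b) :
    expSum a b =O[atTop] fun y ↦ exp (-β * y) := by
  set M := ∑' i, |a i| * exp (-b i * 1)
  refine .of_bound (M * exp β) ?_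
  filter_upwards [eventually_ge_atTop 1] with y hy
  have hterm (i : ι) :
      ‖a i * exp (-b i * y)‖ ≤ |a i| * exp (-b i * 1) * (exp β * exp (-β * y)) := by
    rw [Real.norm_eq_abs, abs_mul, abs_of_pos (exp_pos _), mul_assoc, ← exp_add, ← exp_add]
    gcongr
    nlinarith [hβ i]
  calc ‖expSum a b y‖ ≤ ∑' i, |a i| * exp (-b i * 1) * (exp β * exp (-β * y)) :=
        tsum_of_norm_bounded ((ha 1 one_pos).mul_right _).hasSum hterm
    _ = M * exp β * ‖exp (-β * y)‖ := by
        rw [tsum_mul_right, Real.norm_of_nonneg (exp_pos _).le, mul_assoc]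

end ExpSum

lemma expSummable_nat_of_abs_le {a b : ℕ → ℝ} {C : ℝ} {m : ℕ}
    (ha : ∀ k, |a k| ≤ C * ((k : ℝ) + 1) ^ m) (hb : ∀ k : ℕ, (k : ℝ) ≤ b k) :
    ExpSummable a b := by
  intro y hy
  have hshift : Summable fun k : ℕ ↦ ((k + 1 : ℕ) : ℝ) ^ m * exp (-y * (k + 1 : ℕ)) :=
    (summable_nat_add_iff 1).mpr (summable_pow_mul_exp_neg_nat_mul m hy)
  refine (hshift.mul_left (C * exp y)).of_nonneg_of_le (fun k ↦ by positivity) fun k ↦ ?_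
  have hexp : exp (-b k * y) ≤ exp y * exp (-y * (k + 1 : ℕ)) := by
    rw [← exp_add]; push_cast; gcongr; nlinarith [hb k]
  calc |a k| * exp (-b k * y) ≤ C * ((k : ℝ) + 1) ^ m * (exp y * exp (-y * (k + 1 : ℕ))) :=
        mul_le_mul (ha k) hexp (exp_pos _).le ((abs_nonneg _).trans (ha k))
    _ = _ := by push_cast; ring

lemma tendsto_rpow_mul_comp_inv_nhdsGT_zero {g : ℝ → ℝ} {β : ℝ} (hβ : 0 < β)
    (hg : g =O[atTop] fun u ↦ exp (-β * u)) (s : ℝ) :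
    Tendsto (fun t ↦ t ^ s * g t⁻¹) (𝓝[>] 0) (𝓝 0) := by
  have h := ((isBigO_refl (fun u : ℝ ↦ u ^ (-s)) atTop).mul hg).trans_tendsto
    (tendsto_rpow_mul_exp_neg_mul_atTop_nhds_zero (-s) β hβ)
  refine (h.comp tendsto_inv_nhdsGT_zero).congr' ?_
  filter_upwards [self_mem_nhdsWithin] with t ht
  simp only [Function.comp_apply, inv_rpow (le_of_lt ht), rpow_neg (le_of_lt ht), inv_inv]

lemma hasDerivAt_rpow_mul_comp_inv {g : ℝ → ℝ} {d t : ℝ} (ht : 0 < t)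
    (hg : HasDerivAt g d t⁻¹) (s : ℝ) :
    HasDerivAt (fun t ↦ t ^ s * g t⁻¹) (s * t ^ (s - 1) * g t⁻¹ - t ^ (s - 2) * d) t := by
  refine ((hasDerivAt_rpow_const (Or.inl ht.ne')).mul
    (hg.comp t (hasDerivAt_inv ht.ne'))).congr_deriv ?_
  rw [rpow_sub ht s 2, rpow_two, Function.comp_apply]
  field_simp
  ring

lemma tendsto_div_nhdsGT_zero {c : ℝ} (hc : 0 < c) :
    Tendsto (fun x : ℝ ↦ x / c) (𝓝[>] 0) (𝓝[>] 0) :=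
  tendsto_nhdsWithin_of_tendsto_nhds_of_eventually_within _
    (((continuous_id.div_const c).tendsto' 0 0 (zero_div c)).mono_left nhdsWithin_le_nhds)
    (eventually_nhdsWithin_of_forall fun _ hx ↦ div_pos hx hc)

lemma integral_Ioi_of_hasDerivAt_of_tendsto_nhdsGT {f f' : ℝ → ℝ} {a l₀ l₁ : ℝ}
    (hderiv : ∀ x ∈ Ioi a, HasDerivAt f (f' x) x) (hint : IntegrableOn f' (Ioi a))
    (ha : Tendsto f (𝓝[>] a) (𝓝 l₀)) (hf : Tendsto f atTop (𝓝 l₁)) :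
    ∫ x in Ioi a, f' x = l₁ - l₀ := by
  classical
  have hcont : ContinuousWithinAt (Function.update f a l₀) (Ici a) a := by
    rwa [← continuousWithinAt_Ioi_iff_Ici, continuousWithinAt_update_same,
      sdiff_singleton_eq_self self_notMem_Ioi]
  have heq : ∀ᶠ x in atTop, Function.update f a l₀ x = f x := by
    filter_upwards [eventually_gt_atTop a] with x hx using Function.update_of_ne hx.ne' _ _
  rw [integral_Ioi_of_hasDerivAt_of_tendsto hcont (fun x hx ↦ ?_) hint
    (hf.congr' (heq.mono fun _ h ↦ h.symm)), Function.update_self]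
  refine (hderiv x hx).congr_of_eventuallyEq ?_
  filter_upwards [Ioi_mem_nhds hx] with y hy using Function.update_of_ne (ne_of_gt hy) _ _

namespace ThetaDensity

def kernelCoeff (n : ℤ) : ℝ := n + 4⁻¹

def kernelRate (n : ℤ) : ℝ := π * (n + 4⁻¹) ^ 2

lemma kernelRate_nonneg (n : ℤ) : 0 ≤ kernelRate n := by
  unfold kernelRate; positivity

lemma pi_div_sixteen_le_kernelRate (n : ℤ) : π / 16 ≤ kernelRate n := by
  have hsq : (1 : ℝ) / 16 ≤ ((n : ℝ) + 4⁻¹) ^ 2 := by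
    rcases le_or_gt 0 n with h | h
    · have : (0 : ℝ) ≤ n := by exact_mod_cast h
      nlinarith
    · have : (n : ℝ) ≤ -1 := by exact_mod_cast Int.le_sub_one_of_lt h
      nlinarith
  unfold kernelRate
  nlinarith [pi_pos]

lemma expSummable_kernel : ExpSummable kernelCoeff kernelRate := fun y hy ↦
  (HurwitzKernelBounds.summable_f_int 1 4⁻¹ hy).congr fun n ↦ by
    rw [HurwitzKernelBounds.f_int, pow_one, kernelCoeff, kernelRate]
    ring_nf

lemma oddKernel_quarter_eq_expSum {u : ℝ} (hu : 0 < u) :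
    oddKernel ↑(4⁻¹ : ℝ) u = expSum kernelCoeff kernelRate u := by
  rw [← (hasSum_int_oddKernel 4⁻¹ hu).tsum_eq, expSum]
  congr with n
  simp only [kernelCoeff, kernelRate]
  ring_nf

lemma sinKernel_quarter_eq {t : ℝ} (ht : 0 < t) :
    sinKernel ↑(4⁻¹ : ℝ) t = t ^ (-(3 / 2) : ℝ) * expSum kernelCoeff kernelRate t⁻¹ := by
  rw [← oddKernel_quarter_eq_expSum (inv_pos.mpr ht), oddKernel_functional_equation]
  simp only [one_div, inv_inv]
  rw [inv_rpow ht.le, inv_inv, ← mul_assoc, ← rpow_add ht, neg_add_cancel, rpow_zero, one_mul]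

lemma sinKernel_quarter_flat :
    Tendsto (sinKernel ↑(4⁻¹ : ℝ)) (𝓝[>] 0) (𝓝 0) ∧
      ∃ S' : ℝ → ℝ, (∀ t > 0, HasDerivAt (sinKernel ↑(4⁻¹ : ℝ)) (S' t) t) ∧
        Tendsto S' (𝓝[>] 0) (𝓝 0) := by
  have hK := expSummable_kernel
  have hβ : 0 < π / 16 := by positivity
  have hO := isBigO_atTop_expSum pi_div_sixteen_le_kernelRate hK
  have hO' := (isBigO_atTop_expSum pi_div_sixteen_le_kernelRate
    (hK.mul_rate kernelRate_nonneg)).neg_left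
  have heq : EqOn (sinKernel ↑(4⁻¹ : ℝ))
      (fun t ↦ t ^ (-(3 / 2) : ℝ) * expSum kernelCoeff kernelRate t⁻¹) (Ioi 0) :=
    fun t ht ↦ sinKernel_quarter_eq ht
  refine ⟨(tendsto_rpow_mul_comp_inv_nhdsGT_zero hβ hO _).congr'
      (eventuallyEq_nhdsWithin_of_eqOn heq).symm,
    fun t ↦ -(3 / 2) * t ^ (-(3 / 2) - 1 : ℝ) * expSum kernelCoeff kernelRate t⁻¹ -
      t ^ (-(3 / 2) - 2 : ℝ) * -expSum (kernelCoeff * kernelRate) kernelRate t⁻¹,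
    fun t ht ↦ ?_, ?_⟩
  · exact (hasDerivAt_rpow_mul_comp_inv ht
      (hasDerivAt_expSum kernelRate_nonneg hK (inv_pos.mpr ht)) _).congr_of_eventuallyEq
      (heq.eventuallyEq_of_mem (Ioi_mem_nhds ht))
  · simpa [mul_assoc] using
      ((tendsto_rpow_mul_comp_inv_nhdsGT_zero hβ hO (-(3 / 2) - 1)).const_mul (-(3 / 2))).sub
        (tendsto_rpow_mul_comp_inv_nhdsGT_zero hβ hO' (-(3 / 2) - 2))

/- The index `k` stands for `k + 2` in `∑_{k ≥ 2}`, so `expSum tailCoeff pairs` is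
`P(x) = ∑_{k≥2} (-1)^k (2k-1) e^{-C(k,2) x}` and the integrand is
`expSum (tailCoeff * pairs) pairs`. -/
def pairs (k : ℕ) : ℝ := ((k + 2).choose 2 : ℕ)

def tailCoeff (k : ℕ) : ℝ := (-1) ^ (k + 2) * (2 * ((k : ℝ) + 2) - 1)

lemma pairs_eq (k : ℕ) : pairs k = ((k : ℝ) + 2) * ((k : ℝ) + 1) / 2 := by
  rw [pairs, Nat.cast_choose_two]
  push_cast
  ring

lemma one_le_pairs (k : ℕ) : 1 ≤ pairs k := by
  rw [pairs_eq]; nlinarith [(Nat.cast_nonneg k : (0 : ℝ) ≤ k)]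

lemma pairs_nonneg (k : ℕ) : 0 ≤ pairs k := zero_le_one.trans (one_le_pairs k)

lemma expSummable_tail : ExpSummable tailCoeff pairs := by
  refine expSummable_nat_of_abs_le (C := 3) (m := 1) (fun k ↦ ?_) (fun k ↦ ?_)
  · have hk : (0 : ℝ) ≤ k := Nat.cast_nonneg k
    rw [tailCoeff, abs_mul, abs_pow, abs_neg, abs_one, one_pow, one_mul, abs_of_pos (by linarith)]
    linarith
  · rw [pairs_eq]; nlinarith [(Nat.cast_nonneg k : (0 : ℝ) ≤ k)]

lemma hasSum_sinKernel_quarter {t : ℝ} (ht : 0 < t) :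
    HasSum (fun j : ℕ ↦ 2 * (2 * (j : ℝ) + 1) * (-1) ^ j * exp (-π * (2 * (j : ℝ) + 1) ^ 2 * t))
      (sinKernel ↑(4⁻¹ : ℝ) t) := by
  have hodd : Function.Injective fun j : ℕ ↦ 2 * j + 1 := fun i j h ↦ by simp only at h; omega
  have heven : ∀ n ∉ range fun j : ℕ ↦ 2 * j + 1,
      2 * (n : ℝ) * sin (2 * π * 4⁻¹ * n) * exp (-π * (n : ℝ) ^ 2 * t) = 0 := by
    intro n hn
    obtain ⟨m, rfl⟩ : Even n := Nat.not_odd_iff_even.mp fun ⟨m, hm⟩ ↦ hn ⟨m, hm.symm⟩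
    rw [show 2 * π * 4⁻¹ * ((m + m : ℕ) : ℝ) = m * π by push_cast; ring, sin_nat_mul_pi]
    ring
  refine ((hodd.hasSum_iff heven).mpr (hasSum_nat_sinKernel 4⁻¹ ht)).congr_fun fun j ↦ ?_
  rw [Function.comp_apply, show 2 * π * 4⁻¹ * ((2 * j + 1 : ℕ) : ℝ) = j * π + π / 2 by
    push_cast; ring, sin_add_pi_div_two, cos_nat_mul_pi]
  push_cast
  ring

lemma expSum_tail_eq {x : ℝ} (hx : 0 < x) :
    expSum tailCoeff pairs x = 1 - 2⁻¹ * exp (x / 8) * sinKernel ↑(4⁻¹ : ℝ) (x / (8 * π)) := by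
  have h := (hasSum_sinKernel_quarter (by positivity : 0 < x / (8 * π))).mul_left
    (2⁻¹ * exp (x / 8))
  have h' := (hasSum_nat_add_iff' 1).mpr h
  rw [Finset.sum_range_one] at h'
  have hexp (k : ℕ) :
      exp (x / 8) * exp (-π * (2 * ((k + 1 : ℕ) : ℝ) + 1) ^ 2 * (x / (8 * π))) =
        exp (-pairs k * x) := by
    rw [← exp_add, pairs_eq]
    congr 1
    field_simp
    push_cast
    ring
  have hexp0 : exp (x / 8) * exp (-π * (2 * ((0 : ℕ) : ℝ) + 1) ^ 2 * (x / (8 * π))) = 1 := by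
    rw [← exp_add, exp_eq_one_iff]
    field_simp
    ring
  refine (h'.neg.congr_fun fun k ↦ ?_).tsum_eq.trans ?_
  · have hk := hexp k
    push_cast at hk ⊢
    rw [tailCoeff]
    linear_combination (2 * (k : ℝ) + 3) * (-1) ^ (k + 1) * hk
  · linear_combination hexp0

lemma tendsto_expSum_tail_nhdsGT_zero : Tendsto (expSum tailCoeff pairs) (𝓝[>] 0) (𝓝 1) := by
  have hS := sinKernel_quarter_flat.1.comp (tendsto_div_nhdsGT_zero (by positivity : 0 < 8 * π))
  have hexp : Tendsto (fun x : ℝ ↦ exp (x / 8)) (𝓝[>] 0) (𝓝 1) :=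
    ((by fun_prop : Continuous fun x : ℝ ↦ exp (x / 8)).tendsto' 0 1 (by simp)).mono_left
      nhdsWithin_le_nhds
  refine Tendsto.congr' (eventuallyEq_nhdsWithin_of_eqOn fun x hx ↦ (expSum_tail_eq hx).symm) ?_
  simpa using tendsto_const_nhds.sub ((hexp.const_mul 2⁻¹).mul hS)

lemma tendsto_density_nhdsGT_zero :
    Tendsto (expSum (tailCoeff * pairs) pairs) (𝓝[>] 0) (𝓝 0) := by
  obtain ⟨hS, S', hS', hS'0⟩ := sinKernel_quarter_flat
  have h8π : 0 < 8 * π := by positivity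
  have hD (x : ℝ) (hx : 0 < x) : expSum (tailCoeff * pairs) pairs x = 2⁻¹ * exp (x / 8) *
      (sinKernel ↑(4⁻¹ : ℝ) (x / (8 * π)) / 8 + S' (x / (8 * π)) / (8 * π)) := by
    have hG := ((((hasDerivAt_id x).div_const 8).exp.mul
      ((hS' _ (div_pos hx h8π)).comp x ((hasDerivAt_id x).div_const (8 * π)))).const_mul
        2⁻¹).const_sub 1
    have h := (hasDerivAt_expSum pairs_nonneg expSummable_tail hx).unique <|
      hG.congr_of_eventuallyEq <| Set.EqOn.eventuallyEq_of_mem (fun y hy ↦ by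
        simp only [expSum_tail_eq hy, Pi.mul_apply, Function.comp_apply, id, mul_assoc])
        (Ioi_mem_nhds hx)
    simp only [id, Function.comp_apply] at h
    linear_combination -h
  have ht := tendsto_div_nhdsGT_zero h8π
  have hexp : Tendsto (fun x : ℝ ↦ exp (x / 8)) (𝓝[>] 0) (𝓝 1) :=
    ((by fun_prop : Continuous fun x : ℝ ↦ exp (x / 8)).tendsto' 0 1 (by simp)).mono_left
      nhdsWithin_le_nhds
  refine Tendsto.congr' (eventuallyEq_nhdsWithin_of_eqOn fun x hx ↦ (hD x hx).symm) ?_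
  simpa using
    (hexp.const_mul 2⁻¹).mul (((hS.comp ht).div_const 8).add ((hS'0.comp ht).div_const _))

lemma integrableOn_density : IntegrableOn (expSum (tailCoeff * pairs) pairs) (Ioi 0) := by
  have hs := expSummable_tail.mul_rate pairs_nonneg
  have hc := continuousOn_expSum pairs_nonneg hs
  have hm : StronglyMeasurableAtFilter (expSum (tailCoeff * pairs) pairs) atTop :=
    ⟨Ioi 0, Ioi_mem_atTop 0, hc.aestronglyMeasurable measurableSet_Ioi⟩
  refine integrableOn_Ioi_iff_integrableAtFilter_atTop_nhdsWithin.mpr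
    ⟨(isBigO_atTop_expSum one_le_pairs hs).integrableAtFilter hm
      ⟨Ioi 0, Ioi_mem_atTop 0, by simpa using exp_neg_integrableOn_Ioi 0 one_pos⟩,
     tendsto_density_nhdsGT_zero.integrableAtFilter
      (hc.stronglyMeasurableAtFilter_nhdsWithin measurableSet_Ioi 0)
      ((volume.finiteAt_nhds 0).filter_mono nhdsWithin_le_nhds),
     hc.locallyIntegrableOn measurableSet_Ioi⟩

end ThetaDensity

open ThetaDensity in
/-- `f(x) = ∑_{k=2}^∞ (-1)^k e^{-C(k,2)x} C(k,2)(2k-1)` is a probability density on `(0,∞)`: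
its integral over `(0,∞)` equals `1`. -/
theorem stmt10 :
    ∫ x in Set.Ioi (0 : ℝ),
        (∑' k : ℕ, (-1 : ℝ) ^ (k + 2) * Real.exp (-(((k + 2).choose 2 : ℝ)) * x) *
          ((k + 2).choose 2 : ℝ) * (2 * ((k : ℝ) + 2) - 1)) = 1 := by
  have hf : (fun x ↦ ∑' k : ℕ, (-1 : ℝ) ^ (k + 2) * Real.exp (-(((k + 2).choose 2 : ℝ)) * x) *
      ((k + 2).choose 2 : ℝ) * (2 * ((k : ℝ) + 2) - 1)) = expSum (tailCoeff * pairs) pairs :=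
    funext fun x ↦ tsum_congr fun k ↦ by simp only [tailCoeff, pairs, Pi.mul_apply]; ring
  have htop : Tendsto (expSum tailCoeff pairs) atTop (𝓝 0) :=
    (isBigO_atTop_expSum one_le_pairs expSummable_tail).trans_tendsto
      (by simpa using tendsto_exp_neg_atTop_nhds_zero)
  rw [hf, integral_Ioi_of_hasDerivAt_of_tendsto_nhdsGT (f := fun x ↦ -expSum tailCoeff pairs x)
    (fun x hx ↦ (hasDerivAt_expSum pairs_nonneg expSummable_tail hx).neg.congr_deriv (neg_neg _))
    integrableOn_density tendsto_expSum_tail_nhdsGT_zero.neg htop.neg]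
  norm_num
end
end

section
/- Fix a real number t and integers 2 ≤ m with m⁴ = o(n). Then (1 − λ_m)e^{it/n} / (1 − λ_m e^{it/n}) = (C(m,2)/(C(m,2) − it)) · (1 + O(m⁴/n)) as n → ∞, where λ_m = ∏_{j=1}^{m-1}(1 − j/n). -/
/-!
Put `s = C(m,2)/n`, `u = 1 - λ_m` and `τ = t/n`, so that `C(m,2)/(C(m,2) - it) = s/(s - iτ)`.
Since `∑_{j<m} j/n = s`, the Bonferroni bounds `1 - Σ ≤ ∏ (1 - a_j) ≤ 1 - Σ + Σ²/2` give
`s - s²/2 ≤ u ≤ s`. The error is `E = N / (s (1 - (1 - u) e^{iτ}))` with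
`N = iτ ((s - u) - u (e^{iτ} - 1)) + s (e^{iτ} - 1 - iτ) = O(|τ| s² + s τ²)`, and the denominator
is `u - iτ` up to `O(s|τ| + τ²)`, hence of size at least `s/4` because `Re (u - iτ) = u ≥ s/2`.
So `‖E‖ ≤ 2|τ| + 12τ²/s = O(1/n)`, which is stronger than the `O(m⁴/n)` claimed.
-/

open Complex Finset

section ProductBounds

variable {ι : Type*} (s : Finset ι) (f : ι → ℝ)

theorem one_sub_sum_le_prod_one_sub (h0 : ∀ i ∈ s, 0 ≤ f i) (h1 : ∀ i ∈ s, f i ≤ 1) :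
    1 - ∑ i ∈ s, f i ≤ ∏ i ∈ s, (1 - f i) := by
  classical
  induction s using Finset.induction_on with
  | empty => simp
  | insert a s ha ih =>
    rw [sum_insert ha, prod_insert ha]
    have hS : 0 ≤ ∑ i ∈ s, f i := sum_nonneg fun i hi ↦ h0 i (mem_insert_of_mem hi)
    have hP := ih (fun i hi ↦ h0 i (mem_insert_of_mem hi)) fun i hi ↦ h1 i (mem_insert_of_mem hi)
    nlinarith [h0 a (mem_insert_self a s), h1 a (mem_insert_self a s)]

theorem prod_one_sub_le_one_sub_sum_add_sq_div_two (h0 : ∀ i ∈ s, 0 ≤ f i)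
    (h1 : ∀ i ∈ s, f i ≤ 1) :
    ∏ i ∈ s, (1 - f i) ≤ 1 - ∑ i ∈ s, f i + (∑ i ∈ s, f i) ^ 2 / 2 := by
  classical
  induction s using Finset.induction_on with
  | empty => simp
  | insert a s ha ih =>
    rw [sum_insert ha, prod_insert ha]
    have ha0 := h0 a (mem_insert_self a s)
    have hP := ih (fun i hi ↦ h0 i (mem_insert_of_mem hi)) fun i hi ↦ h1 i (mem_insert_of_mem hi)
    nlinarith [mul_le_mul_of_nonneg_left hP (sub_nonneg.2 (h1 a (mem_insert_self a s))),
      mul_nonneg ha0 (sq_nonneg (∑ i ∈ s, f i))]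

end ProductBounds

theorem sum_Icc_one_sub_one_id_eq_choose_two (m : ℕ) :
    ∑ j ∈ Icc 1 (m - 1), j = m.choose 2 := by
  rw [Nat.choose_two_right, ← sum_range_id]
  rcases m with _ | m
  · simp
  · rw [sum_range_succ', Nat.add_sub_cancel, ← Ico_add_one_right_eq_Icc, sum_Ico_eq_sum_range]
    simp [add_comm]

theorem sub_one_le_choose_two {m : ℕ} (hm : 2 ≤ m) : m - 1 ≤ m.choose 2 := by
  obtain ⟨k, rfl⟩ := Nat.exists_eq_add_of_le' (by omega : 1 ≤ m)
  simp [Nat.choose_succ_succ]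

section Perturbation

variable {s u τ : ℝ}

theorem norm_exp_I_mul_sub_one_le (hτ : |τ| ≤ 1) : ‖exp (I * τ) - 1‖ ≤ 2 * |τ| := by
  simpa using norm_exp_sub_one_le (x := I * τ) (by simpa using hτ)

theorem norm_exp_I_mul_sub_one_sub_le (hτ : |τ| ≤ 1) :
    ‖exp (I * τ) - 1 - I * τ‖ ≤ τ ^ 2 := by
  simpa using norm_exp_sub_one_sub_id_le (x := I * τ) (by simpa using hτ)

theorem div_four_le_norm_one_sub_mul_exp (hs1 : s ≤ 1) (hsu : s - s ^ 2 / 2 ≤ u) (hus : u ≤ s)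
    (hτ : |τ| ≤ 1 / 16) (hτs : τ ^ 2 ≤ s / 8) :
    s / 4 ≤ ‖1 - (1 - u) * exp (I * τ)‖ := by
  set z := exp (I * τ)
  have hs : 0 ≤ s := by linarith [sq_nonneg τ]
  have hu : s / 2 ≤ u := by nlinarith
  have hmain : s / 2 ≤ ‖u - I * τ‖ := by
    refine le_trans ?_ (re_le_norm _)
    simpa using hu
  have herr : ‖u * (z - 1) - (z - 1 - I * τ)‖ ≤ s / 4 := by
    calc _ ≤ ‖(u : ℂ)‖ * ‖z - 1‖ + ‖z - 1 - I * τ‖ := by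
          rw [← norm_mul]; exact norm_sub_le _ _
      _ ≤ s * (2 * |τ|) + τ ^ 2 := by
          have := norm_exp_I_mul_sub_one_le (τ := τ) (by linarith)
          have := norm_exp_I_mul_sub_one_sub_le (τ := τ) (by linarith)
          rw [norm_real, Real.norm_of_nonneg (by linarith)]
          gcongr
      _ ≤ s / 4 := by nlinarith
  have hsplit : 1 - (1 - u) * z = (u - I * τ) + (u * (z - 1) - (z - 1 - I * τ)) := by ring
  linarith [hsplit ▸ norm_le_add_norm_add (u - I * τ : ℂ) (u * (z - 1) - (z - 1 - I * τ))]

theorem norm_mul_exp_sub_sub_le (hu : 0 ≤ u) (hsu : s - s ^ 2 / 2 ≤ u) (hus : u ≤ s)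
    (hτ : |τ| ≤ 1) :
    ‖u * exp (I * τ) * (s - I * τ) - s * (1 - (1 - u) * exp (I * τ))‖ ≤
      |τ| * s ^ 2 / 2 + 3 * s * τ ^ 2 := by
  set z := exp (I * τ)
  have hsplit : u * z * (s - I * τ) - s * (1 - (1 - u) * z) =
      I * τ * ((s - u : ℝ) - u * (z - 1)) + s * (z - 1 - I * τ) := by push_cast; ring
  rw [hsplit]
  calc _ ≤ |τ| * (|s - u| + u * ‖z - 1‖) + s * ‖z - 1 - I * τ‖ := by
        refine (norm_add_le _ _).trans (add_le_add ?_ ?_)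
        · rw [norm_mul, norm_mul, norm_I, one_mul, norm_real, Real.norm_eq_abs]
          gcongr
          refine (norm_sub_le _ _).trans_eq ?_
          rw [norm_mul, norm_real, norm_real, Real.norm_eq_abs, Real.norm_of_nonneg hu]
        · rw [norm_mul, norm_real, Real.norm_of_nonneg (hu.trans hus)]
    _ ≤ |τ| * (s ^ 2 / 2 + s * (2 * |τ|)) + s * τ ^ 2 := by
        have := norm_exp_I_mul_sub_one_le hτ
        have := norm_exp_I_mul_sub_one_sub_le hτ
        have : |s - u| ≤ s ^ 2 / 2 := abs_le.2 ⟨by linarith, by linarith⟩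
        have : 0 ≤ s := hu.trans hus
        gcongr
    _ = |τ| * s ^ 2 / 2 + 3 * s * τ ^ 2 := by rw [← sq_abs τ]; ring

theorem exists_mul_exp_div_eq_div_mul_one_add (hs : 0 < s) (hs1 : s ≤ 1)
    (hsu : s - s ^ 2 / 2 ≤ u) (hus : u ≤ s) (hτ : |τ| ≤ 1 / 16) (hτs : τ ^ 2 ≤ s / 8) :
    ∃ E : ℂ, u * exp (I * τ) / (1 - (1 - u) * exp (I * τ)) = s / (s - I * τ) * (1 + E) ∧
      ‖E‖ ≤ 2 * |τ| + 12 * τ ^ 2 / s := by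
  set z := exp (I * τ)
  set B := 1 - (1 - u) * z
  have hB : s / 4 ≤ ‖B‖ := div_four_le_norm_one_sub_mul_exp hs1 hsu hus hτ hτs
  have hN := norm_mul_exp_sub_sub_le (by nlinarith) hsu hus (hτ.trans (by norm_num))
  have hB0 : B ≠ 0 := norm_pos_iff.1 (by linarith)
  have hs0 : (s : ℂ) ≠ 0 := ofReal_ne_zero.2 hs.ne'
  have hsτ : (s : ℂ) - I * τ ≠ 0 := fun h ↦ by simpa [hs.ne'] using congrArg re h
  refine ⟨(u * z * (s - I * τ) - s * B) / (s * B), by field_simp; ring, ?_⟩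
  rw [norm_div, norm_mul, norm_real, Real.norm_of_nonneg hs.le, div_le_iff₀ (by positivity)]
  calc _ ≤ |τ| * s ^ 2 / 2 + 3 * s * τ ^ 2 := hN
    _ = (2 * |τ| + 12 * τ ^ 2 / s) * (s * (s / 4)) := by field_simp; ring
    _ ≤ _ := by gcongr

end Perturbation

theorem one_sub_choose_two_div_le_prod_Icc (n m : ℕ) (hmn : m - 1 ≤ n) :
    1 - (m.choose 2 : ℝ) / n ≤ ∏ j ∈ Icc 1 (m - 1), (1 - (j : ℝ) / n) ∧
      ∏ j ∈ Icc 1 (m - 1), (1 - (j : ℝ) / n) ≤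
        1 - (m.choose 2 : ℝ) / n + ((m.choose 2 : ℝ) / n) ^ 2 / 2 := by
  have hsum : ∑ j ∈ Icc 1 (m - 1), (j : ℝ) / n = (m.choose 2 : ℝ) / n := by
    rw [← sum_div, ← sum_Icc_one_sub_one_id_eq_choose_two, Nat.cast_sum]
  have h0 : ∀ j ∈ Icc 1 (m - 1), 0 ≤ (j : ℝ) / n := fun j _ ↦ by positivity
  have h1 : ∀ j ∈ Icc 1 (m - 1), (j : ℝ) / n ≤ 1 := fun j hj ↦
    div_le_one_of_le₀ (by exact_mod_cast (mem_Icc.1 hj).2.trans hmn) n.cast_nonneg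
  rw [← hsum]
  exact ⟨one_sub_sum_le_prod_one_sub _ _ h0 h1,
    prod_one_sub_le_one_sub_sum_add_sq_div_two _ _ h0 h1⟩

theorem exists_one_sub_prod_mul_exp_div_eq (t : ℝ) {n m : ℕ} (hm : 2 ≤ m)
    (hcn : (m.choose 2 : ℝ) ≤ n) (ht : 16 * |t| ≤ n) (ht2 : 8 * t ^ 2 ≤ n) :
    ∃ E : ℂ,
      ((1 - (∏ j ∈ Icc 1 (m - 1), (1 - (j : ℂ) / n))) * exp (I * t / n)) /
          (1 - (∏ j ∈ Icc 1 (m - 1), (1 - (j : ℂ) / n)) * exp (I * t / n)) =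
        ((m.choose 2 : ℂ) / ((m.choose 2 : ℂ) - I * t)) * (1 + E) ∧
      ‖E‖ ≤ (2 * |t| + 12 * t ^ 2) / n := by
  set L := ∏ j ∈ Icc 1 (m - 1), (1 - (j : ℝ) / n)
  have hc : 1 ≤ (m.choose 2 : ℝ) := by exact_mod_cast Nat.choose_pos hm
  have hn : 0 < (n : ℝ) := by linarith
  have hmn : m - 1 ≤ n := (sub_one_le_choose_two hm).trans (by exact_mod_cast hcn)
  obtain ⟨hL1, hL2⟩ := one_sub_choose_two_div_le_prod_Icc n m hmn
  obtain ⟨E, hE, hEb⟩ := exists_mul_exp_div_eq_div_mul_one_add (s := m.choose 2 / n)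
    (u := 1 - L) (τ := t / n) (by positivity) ((div_le_one hn).2 hcn) (by linarith)
    (by linarith) (by rw [abs_div, Nat.abs_cast, div_le_iff₀ hn]; linarith)
    (by field_simp; nlinarith)
  refine ⟨E, ?_, hEb.trans ?_⟩
  · have hLc : ∏ j ∈ Icc 1 (m - 1), (1 - (j : ℂ) / n) = L := by push_cast [L]; rfl
    have hz : I * (t : ℂ) / n = I * ((t / n : ℝ) : ℂ) := by push_cast; ring
    have hsτ : ((m.choose 2 / n : ℝ) : ℂ) / ((m.choose 2 / n : ℝ) - I * (t / n : ℝ)) =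
        (m.choose 2 : ℂ) / ((m.choose 2 : ℂ) - I * t) := by
      have hn' : (n : ℂ) ≠ 0 := by exact_mod_cast hn.ne'
      push_cast
      rw [← mul_div_assoc, ← sub_div, div_div_div_cancel_right₀ hn']
    rw [hLc, hz, ← hsτ, ← hE]
    push_cast
    ring
  · calc _ = (2 * |t| + 12 * t ^ 2 / m.choose 2) / n := by
          rw [abs_div, Nat.abs_cast]; field_simp
      _ ≤ _ := by gcongr; exact div_le_self (by positivity) hc

/-- For fixed real `t`, uniformly in `m` with `m⁴` small compared to `n`,
`(1-λ_m)e^{it/n}/(1-λ_m e^{it/n}) = (C(m,2)/(C(m,2)-it))·(1 + O(m⁴/n))`,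
where `λ_m = ∏_{j=1}^{m-1}(1-j/n)`; the implied constant depends only on `t`. -/
theorem stmt13 (t : ℝ) :
    ∃ K : ℝ, 0 < K ∧ ∀ n m : ℕ, 2 ≤ m → 2 * K * (m : ℝ) ^ 4 ≤ (n : ℝ) →
      ∃ E : ℂ,
        ((1 - (∏ j ∈ Finset.Icc 1 (m - 1), (1 - (j : ℂ) / n))) *
            Complex.exp (Complex.I * t / n)) /
          (1 - (∏ j ∈ Finset.Icc 1 (m - 1), (1 - (j : ℂ) / n)) *
            Complex.exp (Complex.I * t / n)) =
          ((m.choose 2 : ℂ) / ((m.choose 2 : ℂ) - Complex.I * t)) * (1 + E) ∧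
        ‖E‖ ≤ K * (m : ℝ) ^ 4 / n := by
  set K := 1 + 2 * |t| + 12 * t ^ 2 with hK_def
  have hK : 1 ≤ K := by nlinarith [abs_nonneg t]
  refine ⟨K, by positivity, fun n m hm hn ↦ ?_⟩
  have hm4 : 16 ≤ (m : ℝ) ^ 4 := by
    have : (2 : ℝ) ≤ m := by exact_mod_cast hm
    nlinarith [pow_le_pow_left₀ zero_le_two this 4]
  have hcm : (m.choose 2 : ℝ) ≤ m ^ 4 := by
    calc (m.choose 2 : ℝ) ≤ m ^ 2 := by exact_mod_cast Nat.choose_le_pow m 2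
      _ ≤ m ^ 4 := pow_le_pow_right₀ (by exact_mod_cast (by omega : 1 ≤ m)) (by norm_num)
  have hKn : 32 * K ≤ n := by nlinarith
  obtain ⟨E, hE, hEb⟩ := exists_one_sub_prod_mul_exp_div_eq t (n := n) hm (by nlinarith)
    (by linarith [abs_nonneg t, sq_nonneg t]) (by linarith [abs_nonneg t])
  refine ⟨E, hE, hEb.trans (div_le_div_of_nonneg_right ?_ n.cast_nonneg)⟩
  nlinarith [abs_nonneg t]
end

section
/- For every real t, ∏_{m=2}^∞ C(m,2)/(C(m,2) − it) = −2πit / cos((π/2)√(1+8it)), with the convention that at t = 0 the right-hand side is interpreted as its limit 1. -/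
/-!
Put `s = √(1 + 8it)`, `α = (1 + s)/2` and `β = (1 - s)/2`, so that `α + β = 1` and
`αβ = -2it`. Then `2 (C(k+2,2) - it) = (k + 1 + α)(k + 1 + β)`, and the partial products are,
up to a factor `(n + 1)/n → 1`, the products `αΓₙ(α) · βΓₙ(β)` of Euler's Gamma sequences.
They converge to `αβ Γ(α) Γ(1 - α) = παβ / sin(πα)` by the reflection formula, and
`sin(πα) = cos(πs/2)`.
-/

open Filter Real Finset Nat Topology

namespace Complex

theorem mul_GammaSeq {s : ℂ} (hs : s ≠ 0) (n : ℕ) :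
    s * GammaSeq s n = n ^ s * n ! / ∏ k ∈ range n, (k + 1 + s) := by
  rw [GammaSeq, prod_range_succ', div_mul_eq_div_div]
  push_cast
  rw [add_zero, mul_div_cancel₀ _ hs]
  simp_rw [add_comm s]

theorem prod_range_mul_div_mul_eq_GammaSeq {α β : ℂ} (hsum : α + β = 1) (hα : α ≠ 0)
    (hβ : β ≠ 0) {n : ℕ} (hn : n ≠ 0) :
    ∏ k ∈ range n, ((k + 1) * (k + 2) / ((k + 1 + α) * (k + 1 + β)) : ℂ) =
      (n + 1) / n * (α * GammaSeq α n * (β * GammaSeq β n)) := by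
  have hn' : (n : ℂ) ≠ 0 := by exact_mod_cast hn
  have hpow : (n : ℂ) ^ α * (n : ℂ) ^ β = n := by rw [← cpow_add _ _ hn', hsum, cpow_one]
  have hfact : ∏ k ∈ range n, ((k : ℂ) + 1) = n ! := by
    exact_mod_cast prod_range_add_one_eq_factorial n
  have hfact_succ : ∏ k ∈ range n, ((k : ℂ) + 2) = (n + 1) * n ! := by
    have := prod_range_add_one_eq_factorial (n + 1)
    rw [prod_range_succ', factorial_succ, zero_add, mul_one] at this
    exact_mod_cast this
  rw [mul_GammaSeq hα, mul_GammaSeq hβ, div_mul_div_comm (_ * _ : ℂ), mul_mul_mul_comm, hpow,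
    prod_div_distrib, prod_mul_distrib, prod_mul_distrib, hfact, hfact_succ,
    mul_div_assoc (n : ℂ), ← mul_assoc (((n : ℂ) + 1) / n), div_mul_cancel₀ _ hn']
  ring

theorem tendsto_prod_range_mul_div_mul {α β : ℂ} (hsum : α + β = 1) (hα : α ≠ 0)
    (hβ : β ≠ 0) :
    Tendsto (fun n : ℕ => ∏ k ∈ range n, ((k + 1) * (k + 2) / ((k + 1 + α) * (k + 1 + β)) : ℂ))
      atTop (𝓝 (π * (α * β) / sin (π * α))) := by
  have hlim : Tendsto (fun n : ℕ => ((n : ℂ) + 1) / n) atTop (𝓝 1) := by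
    simpa using (tendsto_natCast_div_add_atTop (1 : ℂ)).inv₀ one_ne_zero
  have hGamma := hlim.mul (((GammaSeq_tendsto_Gamma α).const_mul α).mul
    ((GammaSeq_tendsto_Gamma β).const_mul β))
  obtain rfl : β = 1 - α := eq_sub_of_add_eq' hsum
  rw [one_mul, mul_mul_mul_comm, Gamma_mul_Gamma_one_sub, mul_comm (α * (1 - α)),
    div_mul_eq_mul_div] at hGamma
  refine hGamma.congr' ?_
  filter_upwards [eventually_ne_atTop 0] with n hn
  rw [prod_range_mul_div_mul_eq_GammaSeq hsum hα hβ hn]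

end Complex

theorem tendsto_prod_Icc_of_tendsto_prod_range {M : Type*} [CommMonoid M] [TopologicalSpace M]
    {f : ℕ → M} {a : M} (j : ℕ)
    (h : Tendsto (fun n => ∏ k ∈ range n, f (j + k)) atTop (𝓝 a)) :
    Tendsto (fun n => ∏ m ∈ Icc j n, f m) atTop (𝓝 a) := by
  simp_rw [← Ico_add_one_right_eq_Icc, prod_Ico_eq_prod_range]
  exact h.comp (tendsto_sub_atTop_nat j |>.comp (tendsto_add_atTop_nat 1))

theorem choose_two_div_choose_two_sub_eq {α β z : ℂ} (hsum : α + β = 1)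
    (hprod : α * β = -2 * z) (k : ℕ) :
    ((2 + k).choose 2 : ℂ) / ((2 + k).choose 2 - z) =
      (k + 1) * (k + 2) / ((k + 1 + α) * (k + 1 + β)) := by
  have hden : (k + 1 + α) * (k + 1 + β) = (k + 1) * (k + 2) - 2 * z := by
    linear_combination (k + 1 : ℂ) * hsum + hprod
  rw [hden, cast_choose_two, ← mul_div_mul_left _ _ (two_ne_zero' ℂ)]
  push_cast
  ring_nf

/-- For every real `t`, `∏_{m=2}^∞ C(m,2)/(C(m,2)-it) = -2πit / cos((π/2)√(1+8it))`,
with the right-hand side interpreted as its limit `1` when `t = 0`. -/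
theorem stmt15 (t : ℝ) :
    Tendsto (fun N : ℕ => ∏ m ∈ Finset.Icc 2 N,
        ((m.choose 2 : ℂ) / ((m.choose 2 : ℂ) - Complex.I * t))) atTop
      (nhds (if t = 0 then 1 else
        -2 * π * Complex.I * t /
          Complex.cos (π / 2 * (1 + 8 * Complex.I * t) ^ ((1 : ℂ) / 2)))) := by
  split_ifs with ht
  · subst ht
    refine tendsto_const_nhds.congr fun N => (prod_eq_one fun m hm => ?_).symm
    have : (m.choose 2 : ℂ) ≠ 0 := by exact_mod_cast (choose_pos (mem_Icc.mp hm).1).ne'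
    simp [this]
  have hs : ((1 + 8 * Complex.I * t) ^ ((1 : ℂ) / 2)) ^ 2 = 1 + 8 * Complex.I * t := by
    rw [one_div, ← Nat.cast_two, Complex.cpow_nat_inv_pow _ two_ne_zero]
  generalize (1 + 8 * Complex.I * t) ^ ((1 : ℂ) / 2) = s at hs ⊢
  have hsum : (1 + s) / 2 + (1 - s) / 2 = 1 := by ring
  have hprod : (1 + s) / 2 * ((1 - s) / 2) = -2 * (Complex.I * t) := by
    linear_combination (-1 / 4 : ℂ) * hs
  have hne : (1 + s) / 2 * ((1 - s) / 2) ≠ 0 := by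
    rw [hprod]; simp [ht]
  refine tendsto_prod_Icc_of_tendsto_prod_range 2 ?_
  simp_rw [choose_two_div_choose_two_sub_eq hsum hprod]
  convert Complex.tendsto_prod_range_mul_div_mul hsum (left_ne_zero_of_mul hne)
    (right_ne_zero_of_mul hne) using 2
  rw [hprod, show (π : ℂ) * ((1 + s) / 2) = π / 2 * s + π / 2 by ring,
    Complex.sin_add_pi_div_two]
  ring
end
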